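/- arXiv:1805.08266 — 3 statements merged into one kernel-verified Lean document; each statement's English description precedes it below -/
import Mathlib

section
/- Let λ, β ∈ ℝ, not both zero, and let φ(x) = λx for x > 0 and φ(x) = βx for x ≤ 0 (a ReLU-like activation), with derivative φ'(x) = λ for x > 0 and β for x < 0. Then E[φ'(Z)²] = (λ² + β²)/2, and if σ_w² = 2/(λ² + β²) then the variance function satisfies F(x) = σ_b² + x for all x ≥ 0; in particular, F has a fixed point if and only if σ_b = 0, in which case F(x) = x for all x ≥ 0. Hence the edge of chaos for φ is the singleton {(σ_b, σ_w) = (0, 1/√(E[φ'(Z)²]))}. -/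
/-!
The Gaussian measure is invariant under `z ↦ -z` and does not charge `0`, so averaging `z` and `-z`
gives `E[(if Z > 0 then a else b) · w(Z)] = (a + b)/2 · E[w(Z)]` for every even integrable `w`.
Since `φ'(cZ)² = (if Z > 0 then λ² else β²)` almost surely for `c > 0`, and
`φ(√x Z)² = x · (if Z > 0 then λ² else β²) · Z²` with `E[Z²] = 1`, both `E[φ'(√q Z)²]` and
`E[φ(√x Z)²] / x` equal `(λ² + β²)/2`. Hence `F(x) = σ_b² + σ_w² (λ² + β²)/2 · x`, and the
edge-of-chaos condition `σ_w² E[φ'(√q Z)²] = 1` makes `F` the translation `x ↦ σ_b² + x`, which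
has a fixed point only when `σ_b = 0`.
-/

open MeasureTheory ProbabilityTheory Real Filter Topology Set

/-- The standard Gaussian measure `N(0,1)` on `ℝ`. -/
noncomputable def stdG : Measure ℝ := gaussianReal 0 1

/-- The variance function `F(x) = σ_b² + σ_w² E[φ(√x Z)²]` of an activation `φ`. -/
noncomputable def varF (φ : ℝ → ℝ) (σb σw x : ℝ) : ℝ :=
  σb ^ 2 + σw ^ 2 * ∫ z, (φ (Real.sqrt x * z)) ^ 2 ∂stdG

open scoped NNReal

theorem sq_mul_eq_one_iff_eq_one_div_sqrt {m w : ℝ} (hm : 0 < m) (hw : 0 < w) :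
    w ^ 2 * m = 1 ↔ w = 1 / √m := by
  rw [eq_div_iff (sqrt_pos.2 hm).ne',
    ← pow_eq_one_iff_of_nonneg (a := w * √m) (by positivity) two_ne_zero, mul_pow, sq_sqrt hm.le]

instance isNegInvariant_gaussianReal_zero (v : ℝ≥0) : (gaussianReal 0 v).IsNegInvariant :=
  ⟨by simpa [Measure.neg_def] using gaussianReal_map_neg (μ := 0) (v := v)⟩

theorem integral_sq_gaussianReal_zero (v : ℝ≥0) : ∫ x, x ^ 2 ∂gaussianReal 0 v = v := by
  simpa [variance_eq_integral measurable_id'.aemeasurable] using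
    variance_fun_id_gaussianReal (μ := 0) (v := v)

section NegInvariant

variable {μ : Measure ℝ} [μ.IsNegInvariant] [NullSingletonClass μ]

theorem integral_ite_pos_mul_of_even (a b : ℝ) {w : ℝ → ℝ} (hw : Integrable w μ)
    (heven : ∀ x, w (-x) = w x) :
    ∫ z, (if 0 < z then a else b) * w z ∂μ = (a + b) / 2 * ∫ z, w z ∂μ := by
  set g : ℝ → ℝ := fun z => (if 0 < z then a else b) * w z with hg_def
  have hg : Integrable g μ := by
    refine hw.bdd_mul (c := |a| + |b|)
      (Measurable.ite measurableSet_Ioi measurable_const measurable_const).aestronglyMeasurable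
      (ae_of_all _ fun z => ?_)
    split_ifs <;> simp
  have hsym : (fun z => g z + g (-z)) =ᵐ[μ] fun z => (a + b) * w z := by
    filter_upwards [μ.ae_ne 0] with z hz
    rcases hz.lt_or_gt with hz | hz
    · simp only [hg_def, ite_mul, hz.not_gt, ↓reduceIte, Left.neg_pos_iff, hz, heven]; ring
    · simp only [hg_def, ite_mul, hz, ↓reduceIte, Left.neg_pos_iff, hz.not_gt, heven]; ring
  calc ∫ z, g z ∂μ = (∫ z, g z ∂μ + ∫ z, g (-z) ∂μ) / 2 := by
        rw [integral_neg_eq_self]; ring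
    _ = (∫ z, (a + b) * w z ∂μ) / 2 := by
        rw [← integral_add hg hg.comp_neg, integral_congr_ae hsym]
    _ = (a + b) / 2 * ∫ z, w z ∂μ := by rw [integral_const_mul]; ring

theorem integral_ite_pos [IsProbabilityMeasure μ] (a b : ℝ) :
    ∫ z, (if 0 < z then a else b) ∂μ = (a + b) / 2 := by
  simpa using integral_ite_pos_mul_of_even (μ := μ) a b (integrable_const 1) (fun _ => rfl)

end NegInvariant

instance : IsProbabilityMeasure stdG := instIsProbabilityMeasureGaussianReal 0 1

instance : NullSingletonClass stdG := nullSingletonClass_gaussianReal one_ne_zero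

instance : stdG.IsNegInvariant := isNegInvariant_gaussianReal_zero 1

theorem integrable_sq_stdG : Integrable (fun z => z ^ 2) stdG :=
  (memLp_id_gaussianReal (μ := 0) (v := 1) 2).integrable_sq

theorem integral_sq_stdG : ∫ z, z ^ 2 ∂stdG = 1 :=
  (integral_sq_gaussianReal_zero 1).trans NNReal.coe_one

section ReluLike

variable {lam bet : ℝ} {φ φ' : ℝ → ℝ}

theorem integral_sq_relu_comp_mul_stdG
    (hφ : ∀ x, φ x = if 0 < x then lam * x else bet * x)
    {s : ℝ} (hs : 0 ≤ s) :
    ∫ z, φ (s * z) ^ 2 ∂stdG = s ^ 2 * ((lam ^ 2 + bet ^ 2) / 2) := by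
  have hpt : ∀ z, φ (s * z) ^ 2 = s ^ 2 * ((if 0 < z then lam ^ 2 else bet ^ 2) * z ^ 2) := by
    intro z
    rcases hs.eq_or_lt with rfl | hs
    · simp [hφ]
    · by_cases hz : 0 < z
      · rw [hφ, if_pos (mul_pos hs hz), if_pos hz]; ring
      · rw [hφ, if_neg (fun h => hz (pos_of_mul_pos_right h hs.le)), if_neg hz]; ring
  simp_rw [hpt]
  rw [integral_const_mul, integral_ite_pos_mul_of_even _ _ integrable_sq_stdG (fun x => by ring),
    integral_sq_stdG, mul_one]

theorem integral_sq_step_comp_mul_stdG (hφ'p : ∀ x : ℝ, 0 < x → φ' x = lam)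
    (hφ'n : ∀ x : ℝ, x < 0 → φ' x = bet) {c : ℝ} (hc : 0 < c) :
    ∫ z, φ' (c * z) ^ 2 ∂stdG = (lam ^ 2 + bet ^ 2) / 2 := by
  rw [← integral_ite_pos (μ := stdG)]
  refine integral_congr_ae ?_
  filter_upwards [stdG.ae_ne 0] with z hz
  rcases hz.lt_or_gt with hz | hz
  · simp [hφ'n _ (mul_neg_of_pos_of_neg hc hz), hz.not_gt]
  · simp [hφ'p _ (mul_pos hc hz), hz]

theorem varF_eq_of_relu
    (hφ : ∀ x, φ x = if 0 < x then lam * x else bet * x) (σb σw : ℝ) {x : ℝ} (hx : 0 ≤ x) :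
    varF φ σb σw x = σb ^ 2 + σw ^ 2 * ((lam ^ 2 + bet ^ 2) / 2) * x := by
  rw [varF, integral_sq_relu_comp_mul_stdG hφ (sqrt_nonneg x), sq_sqrt hx]
  ring

theorem varF_eq_add_of_sq_eq
    (hφ : ∀ x, φ x = if 0 < x then lam * x else bet * x) (hl : 0 < lam ^ 2 + bet ^ 2)
    {σb σw : ℝ} (hσw : σw ^ 2 = 2 / (lam ^ 2 + bet ^ 2)) {x : ℝ} (hx : 0 ≤ x) :
    varF φ σb σw x = σb ^ 2 + x := by
  rw [varF_eq_of_relu hφ σb σw hx, hσw]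
  field_simp [hl.ne']

theorem edgeOfChaos_eq_singleton
    (hφ : ∀ x, φ x = if 0 < x then lam * x else bet * x)
    (hφ'p : ∀ x : ℝ, 0 < x → φ' x = lam) (hφ'n : ∀ x : ℝ, x < 0 → φ' x = bet)
    (hl : 0 < lam ^ 2 + bet ^ 2) :
    {p : ℝ × ℝ | 0 ≤ p.1 ∧ 0 < p.2 ∧ ∃ q : ℝ, 0 < q ∧ varF φ p.1 p.2 q = q ∧
        p.2 ^ 2 * ∫ z, φ' (√q * z) ^ 2 ∂stdG = 1} =
      {((0 : ℝ), 1 / √((lam ^ 2 + bet ^ 2) / 2))} := by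
  have hEφ' : ∀ q : ℝ, 0 < q → ∫ z, φ' (√q * z) ^ 2 ∂stdG = (lam ^ 2 + bet ^ 2) / 2 :=
    fun q hq => integral_sq_step_comp_mul_stdG hφ'p hφ'n (sqrt_pos.2 hq)
  have hcrit : ∀ w : ℝ, 0 < w → (w ^ 2 * ((lam ^ 2 + bet ^ 2) / 2) = 1 ↔
      w = 1 / √((lam ^ 2 + bet ^ 2) / 2)) :=
    fun w hw => sq_mul_eq_one_iff_eq_one_div_sqrt (by positivity) hw
  ext ⟨σb, σw⟩
  simp only [mem_ofPred_eq, mem_singleton_iff, Prod.mk.injEq]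
  constructor
  · rintro ⟨-, hσw, q, hq, hfix, hedge⟩
    rw [hEφ' q hq] at hedge
    rw [varF_eq_of_relu hφ σb σw hq.le, hedge] at hfix
    exact ⟨(pow_eq_zero_iff two_ne_zero).1 (by linarith), (hcrit σw hσw).1 hedge⟩
  · rintro ⟨rfl, rfl⟩
    have hedge := (hcrit _ (by positivity)).2 rfl
    refine ⟨le_rfl, by positivity, 1, one_pos, ?_, ?_⟩
    · rw [varF_eq_of_relu hφ _ _ zero_le_one, hedge]; ring
    · rw [hEφ' 1 one_pos, hedge]
end ReluLike

/-- For a ReLU-like activation: `E[φ'(Z)²] = (λ²+β²)/2`; if `σ_w² = 2/(λ²+β²)` then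
`F(x) = σ_b² + x` on `x ≥ 0`, so `F` has a fixed point iff `σ_b = 0`, in which case `F(x) = x`;
and the edge of chaos is the singleton `{(0, 1/√(E[φ'(Z)²]))}`. -/
theorem stmt5 (lam bet : ℝ) (hne : ¬(lam = 0 ∧ bet = 0))
    (φ φ' : ℝ → ℝ)
    (hφ : ∀ x, φ x = if 0 < x then lam * x else bet * x)
    (hφ'p : ∀ x : ℝ, 0 < x → φ' x = lam)
    (hφ'n : ∀ x : ℝ, x < 0 → φ' x = bet) :
    (∫ z, (φ' z) ^ 2 ∂stdG) = (lam ^ 2 + bet ^ 2) / 2 ∧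
    (∀ σb σw : ℝ, 0 ≤ σb → 0 < σw → σw ^ 2 = 2 / (lam ^ 2 + bet ^ 2) →
      (∀ x : ℝ, 0 ≤ x → varF φ σb σw x = σb ^ 2 + x) ∧
      ((∃ x : ℝ, 0 ≤ x ∧ varF φ σb σw x = x) ↔ σb = 0) ∧
      (σb = 0 → ∀ x : ℝ, 0 ≤ x → varF φ σb σw x = x)) ∧
    {p : ℝ × ℝ | 0 ≤ p.1 ∧ 0 < p.2 ∧ ∃ q : ℝ, 0 < q ∧ varF φ p.1 p.2 q = q ∧
        p.2 ^ 2 * ∫ z, (φ' (Real.sqrt q * z)) ^ 2 ∂stdG = 1} =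
      {((0 : ℝ), 1 / Real.sqrt (∫ z, (φ' z) ^ 2 ∂stdG))} := by
  have hl : 0 < lam ^ 2 + bet ^ 2 := by
    rcases not_and_or.mp hne with h | h <;> positivity
  have hEφ' : ∫ z, φ' z ^ 2 ∂stdG = (lam ^ 2 + bet ^ 2) / 2 := by
    simpa using integral_sq_step_comp_mul_stdG hφ'p hφ'n one_pos
  refine ⟨hEφ', fun σb σw _ _ hσw => ?_, ?_⟩
  · have hF := fun x (hx : 0 ≤ x) => varF_eq_add_of_sq_eq hφ hl (σb := σb) hσw hx
    refine ⟨hF, ⟨fun ⟨x, hx, hfix⟩ => ?_, fun h => ⟨0, le_rfl, by rw [hF 0 le_rfl, h]; ring⟩⟩,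
      fun h x hx => by rw [hF x hx, h]; ring⟩
    exact (pow_eq_zero_iff two_ne_zero).1 (by linarith [hF x hx])
  · rw [hEφ']
    exact edgeOfChaos_eq_singleton hφ hφ'p hφ'n hl
end

section
/- Let f(x) = (1/π) x arcsin(x) + (1/π) √(1−x²) + x/2. Then f is strictly increasing on [0,1], f(1) = 1, and f(x) > x for every x ∈ [0,1). -/
/-!
The derivative of `f` on `(-1, 1)` is `arcsin x / π + 1 / 2`, which lies strictly between
`0` and `1` because `arcsin` maps `(-1, 1)` into `(-π/2, π/2)`. Hence `f` is strictly increasing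
and `x ↦ f x - x` is strictly decreasing on `[-1, 1]`; since `f 1 = 1`, the latter is positive
on `[-1, 1)`.
-/

open Real Set

noncomputable section

def reluCorrelation (x : ℝ) : ℝ :=
  (1 / π) * x * arcsin x + (1 / π) * √(1 - x ^ 2) + x / 2

lemma continuous_reluCorrelation : Continuous reluCorrelation := by
  unfold reluCorrelation
  fun_prop

lemma reluCorrelation_one : reluCorrelation 1 = 1 := by
  simp only [reluCorrelation, arcsin_one, one_pow, sub_self, sqrt_zero]
  field_simp
  ring

lemma hasDerivAt_reluCorrelation {x : ℝ} (hx : x ∈ Ioo (-1 : ℝ) 1) :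
    HasDerivAt reluCorrelation (arcsin x / π + 1 / 2) x := by
  obtain ⟨hx₀, hx₁⟩ := hx
  have hpos : 0 < 1 - x ^ 2 := by nlinarith
  have harcsin := hasDerivAt_arcsin hx₀.ne' hx₁.ne
  have hradicand : HasDerivAt (fun y : ℝ => 1 - y ^ 2) (-(2 * x)) x := by
    simpa using (hasDerivAt_pow 2 x).const_sub 1
  have hroot := (hasDerivAt_sqrt hpos.ne').comp x hradicand
  have h := ((((hasDerivAt_id' x).const_mul (1 / π)).mul harcsin).add
    (hroot.const_mul (1 / π))).add ((hasDerivAt_id' x).div_const 2)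
  refine h.congr_deriv ?_
  field_simp
  ring

lemma arcsin_div_pi_add_half_pos {x : ℝ} (hx : x ∈ Ioo (-1 : ℝ) 1) :
    0 < arcsin x / π + 1 / 2 := by
  have h : -(π / 2) < arcsin x := neg_pi_div_two_lt_arcsin.mpr hx.1
  have : -(1 / 2) < arcsin x / π := by
    rw [lt_div_iff₀ pi_pos]
    linarith
  linarith

lemma arcsin_div_pi_add_half_lt_one {x : ℝ} (hx : x ∈ Ioo (-1 : ℝ) 1) :
    arcsin x / π + 1 / 2 < 1 := by
  have h : arcsin x < π / 2 := arcsin_lt_pi_div_two.mpr hx.2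
  have : arcsin x / π < 1 / 2 := by
    rw [div_lt_iff₀ pi_pos]
    linarith
  linarith

lemma strictMonoOn_reluCorrelation : StrictMonoOn reluCorrelation (Icc (-1) 1) := by
  refine strictMonoOn_of_deriv_pos (convex_Icc _ _) continuous_reluCorrelation.continuousOn ?_
  intro x hx
  rw [interior_Icc] at hx
  rw [(hasDerivAt_reluCorrelation hx).deriv]
  exact arcsin_div_pi_add_half_pos hx

lemma strictAntiOn_reluCorrelation_sub_id :
    StrictAntiOn (fun x => reluCorrelation x - x) (Icc (-1) 1) := by
  refine strictAntiOn_of_deriv_neg (convex_Icc _ _)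
    (continuous_reluCorrelation.sub continuous_id).continuousOn ?_
  intro x hx
  rw [interior_Icc] at hx
  rw [((hasDerivAt_reluCorrelation hx).fun_sub (hasDerivAt_id' x)).deriv]
  linarith [arcsin_div_pi_add_half_lt_one hx]

lemma lt_reluCorrelation {x : ℝ} (hx : x ∈ Ico (-1 : ℝ) 1) : x < reluCorrelation x := by
  have h : reluCorrelation 1 - 1 < reluCorrelation x - x :=
    strictAntiOn_reluCorrelation_sub_id (Ico_subset_Icc_self hx)
      (right_mem_Icc.mpr (by norm_num)) hx.2
  linarith [reluCorrelation_one]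

end

/-- The ReLU correlation function `f(x) = (1/π) x arcsin(x) + (1/π)√(1−x²) + x/2` is strictly
increasing on `[0,1]`, satisfies `f(1) = 1`, and `f(x) > x` for every `x ∈ [0,1)`. -/
theorem stmt9 (f : ℝ → ℝ)
    (hf : ∀ x, f x = (1 / π) * x * Real.arcsin x + (1 / π) * Real.sqrt (1 - x ^ 2) + x / 2) :
    StrictMonoOn f (Icc 0 1) ∧ f 1 = 1 ∧ ∀ x ∈ Ico (0:ℝ) 1, x < f x := by
  obtain rfl : f = reluCorrelation := funext hf
  refine ⟨strictMonoOn_reluCorrelation.mono (Icc_subset_Icc (by norm_num) le_rfl),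
    reluCorrelation_one, fun x hx => lt_reluCorrelation ?_⟩
  exact Ico_subset_Ico (by norm_num) le_rfl hx
end

section
/- Let φ(t) = t/(1 + e^{−t}) be the Swish activation and g(t) = t φ'(t) φ(t). Then g(t) + g(−t) > 0 for every t ≠ 0; equivalently, for every t > 0, 1 + e^{−t} + t e^{−t} > e^{−3t}(−1 − e^{t} + t e^{t}). Consequently E[Z φ'(√x Z) φ(√x Z)] > 0 for every x > 0, so for any σ_b ≥ 0 and σ_w > 0 the variance function F(x) = σ_b² + σ_w² E[φ(√x Z)²] is strictly increasing on (0, ∞). -/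
open MeasureTheory ProbabilityTheory Real Filter Topology Set

/-- The Swish activation `φ(t) = t·sigmoid(t) = t/(1 + e^{−t})`. -/
noncomputable def swish (t : ℝ) : ℝ := t / (1 + Real.exp (-t))

/-!
With `s = e^{-t}` one computes `g(t) + g(-t) = t² P(t) / (1 + s)³`, where
`P(t) = 1 + s + s² + s³ + t s (1 - s)` (`swishSymNumerator`) is positive because `t` and
`1 - e^{-t}` have the same sign; the exponential inequality is `P(t) > 0` after clearing
denominators.

For the Gaussian statements, symmetrize under `Z ↦ -Z`. The integrand `Z φ'(cZ) φ(cZ)`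
symmetrizes to `(g(cZ) + g(-cZ)) / c > 0`. For monotonicity, `E[φ(cZ)²]` is half of `E[G(cZ)]`
with the even function `G(a) = φ(a)² + φ(-a)²`, and `a G'(a) = 2 (g(a) + g(-a)) > 0`, so `G(cZ)`
increases strictly with `c > 0` whenever `Z ≠ 0`.
-/

theorem integral_pos_of_ae_pos_add_comp_neg {G : Type*} [MeasurableSpace G] [AddGroup G]
    [MeasurableNeg G] {μ : Measure G} [μ.IsNegInvariant] [NeZero μ] {f : G → ℝ}
    (hf : Integrable f μ) (hpos : ∀ᵐ z ∂μ, 0 < f z + f (-z)) : 0 < ∫ z, f z ∂μ := by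
  have h : 0 < ∫ z, f z + f (-z) ∂μ := by
    rw [integral_pos_iff_support_of_nonneg_ae (hpos.mono fun _ hz => hz.le) (hf.add hf.comp_neg),
      pos_iff_ne_zero]
    intro h0
    obtain ⟨z, hz, hz'⟩ := ((measure_eq_zero_iff_ae_notMem.1 h0).and hpos).exists
    exact hz (Function.mem_support.2 hz'.ne')
  rw [integral_add hf hf.comp_neg, integral_neg_eq_self] at h
  linarith

theorem one_add_exp_neg_pos (t : ℝ) : 0 < 1 + exp (-t) := by positivity

theorem hasDerivAt_swish (t : ℝ) :
    HasDerivAt swish ((1 + exp (-t) + t * exp (-t)) / (1 + exp (-t)) ^ 2) t := by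
  have hden : HasDerivAt (fun u => 1 + exp (-u)) (-exp (-t)) t := by
    simpa using ((hasDerivAt_exp (-t)).comp t (hasDerivAt_neg t)).const_add 1
  refine ((hasDerivAt_id t).fun_div hden (one_add_exp_neg_pos t).ne').congr_deriv ?_
  simp only [id]
  ring

theorem deriv_swish (t : ℝ) :
    deriv swish t = (1 + exp (-t) + t * exp (-t)) / (1 + exp (-t)) ^ 2 :=
  (hasDerivAt_swish t).deriv

theorem differentiable_swish : Differentiable ℝ swish :=
  fun t => (hasDerivAt_swish t).differentiableAt

noncomputable def swishSymNumerator (t : ℝ) : ℝ :=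
  1 + exp (-t) + exp (-t) ^ 2 + exp (-t) ^ 3 + t * exp (-t) * (1 - exp (-t))

theorem swishSymNumerator_pos (t : ℝ) : 0 < swishSymNumerator t := by
  have hs := exp_pos (-t)
  have hsign : 0 ≤ t * (1 - exp (-t)) := by
    rcases le_or_gt 0 t with ht | ht
    · exact mul_nonneg ht (sub_nonneg.2 (exp_le_one_iff.2 (by linarith)))
    · exact mul_nonneg_of_nonpos_of_nonpos ht.le (sub_nonpos.2 (one_le_exp (by linarith)))
  unfold swishSymNumerator
  nlinarith [mul_nonneg hs.le hsign]

theorem mul_deriv_swish_mul_swish_add_neg (t : ℝ) :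
    t * deriv swish t * swish t + (-t) * deriv swish (-t) * swish (-t)
      = t ^ 2 * swishSymNumerator t / (1 + exp (-t)) ^ 3 := by
  have hu := exp_pos t
  simp only [deriv_swish, swish, swishSymNumerator, neg_neg, exp_neg]
  field_simp
  ring

theorem mul_deriv_swish_mul_swish_add_neg_pos {t : ℝ} (ht : t ≠ 0) :
    0 < t * deriv swish t * swish t + (-t) * deriv swish (-t) * swish (-t) := by
  rw [mul_deriv_swish_mul_swish_add_neg]
  exact div_pos (mul_pos (by positivity) (swishSymNumerator_pos t))
    (pow_pos (one_add_exp_neg_pos t) 3)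

theorem exp_neg_three_mul_mul_lt (t : ℝ) :
    exp (-(3 * t)) * (-1 - exp t + t * exp t) < 1 + exp (-t) + t * exp (-t) := by
  have hu := exp_pos t
  have h3 : exp (3 * t) = exp t ^ 3 := by rw [← exp_nat_mul]; norm_num
  have hdiff : 1 + exp (-t) + t * exp (-t) - exp (-(3 * t)) * (-1 - exp t + t * exp t)
      = swishSymNumerator t := by
    simp only [swishSymNumerator, exp_neg, h3]
    field_simp
    ring
  linarith [swishSymNumerator_pos t]

theorem abs_swish_le (t : ℝ) : |swish t| ≤ |t| := by
  rw [swish, abs_div, abs_of_pos (one_add_exp_neg_pos t)]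
  exact div_le_self (abs_nonneg t) (by linarith [exp_pos (-t)])

theorem abs_deriv_swish_le (t : ℝ) : |deriv swish t| ≤ 2 := by
  rw [deriv_swish]
  set s := exp (-t) with hs
  have hs0 : 0 < s := exp_pos _
  have hts : |t| * s ≤ (1 + s) ^ 2 := by
    rcases le_or_gt 0 t with ht | ht
    · have hE : exp t * s = 1 := by rw [hs, ← exp_add]; simp
      rw [abs_of_nonneg ht]
      nlinarith [add_one_le_exp t]
    · rw [abs_of_neg ht]
      nlinarith [add_one_le_exp (-t)]
  have hnum : |1 + s + t * s| ≤ 1 + s + |t| * s := by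
    calc |1 + s + t * s| ≤ |1 + s| + |t * s| := abs_add_le _ _
      _ = 1 + s + |t| * s := by rw [abs_of_pos (by positivity), abs_mul, abs_of_pos hs0]
  rw [abs_div, abs_of_pos (by positivity : (0 : ℝ) < (1 + s) ^ 2), div_le_iff₀ (by positivity)]
  nlinarith

theorem hasDerivAt_swish_sq_add_swish_neg_sq (a : ℝ) :
    HasDerivAt (fun a => swish a ^ 2 + swish (-a) ^ 2)
      (2 * swish a * deriv swish a - 2 * swish (-a) * deriv swish (-a)) a := by
  have hpos := (differentiable_swish a).hasDerivAt
  have hneg := (differentiable_swish (-a)).hasDerivAt.comp a (hasDerivAt_neg a)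
  refine ((hpos.fun_pow 2).fun_add (hneg.fun_pow 2)).congr_deriv ?_
  simp only [Function.comp_apply]
  norm_num
  ring

theorem strictMonoOn_swish_sq_add_swish_neg_sq :
    StrictMonoOn (fun a => swish a ^ 2 + swish (-a) ^ 2) (Ici 0) := by
  refine strictMonoOn_of_deriv_pos (convex_Ici 0) ?_ fun a ha => ?_
  · exact (differentiable_swish.continuous.pow 2).add
      ((differentiable_swish.continuous.comp continuous_neg).pow 2) |>.continuousOn
  rw [interior_Ici, mem_Ioi] at ha
  rw [(hasDerivAt_swish_sq_add_swish_neg_sq a).deriv]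
  nlinarith [mul_deriv_swish_mul_swish_add_neg_pos ha.ne']

theorem swish_sq_add_swish_neg_sq_lt {a b : ℝ} (hab : |a| < |b|) :
    swish a ^ 2 + swish (-a) ^ 2 < swish b ^ 2 + swish (-b) ^ 2 := by
  have heven : ∀ x : ℝ, swish x ^ 2 + swish (-x) ^ 2 = swish |x| ^ 2 + swish (-|x|) ^ 2 := by
    intro x
    rcases abs_choice x with hx | hx <;> rw [hx]
    rw [neg_neg, add_comm]
  rw [heven a, heven b]
  exact strictMonoOn_swish_sq_add_swish_neg_sq (abs_nonneg a) (abs_nonneg b) hab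

instance inst_s18 : stdG.IsNegInvariant :=
  ⟨by simpa [stdG, Measure.neg_def] using gaussianReal_map_neg (μ := 0) (v := 1)⟩

instance inst_s18_2 : IsProbabilityMeasure stdG := instIsProbabilityMeasureGaussianReal 0 1

instance inst_s18_3 : NullSingletonClass stdG := nullSingletonClass_gaussianReal one_ne_zero

theorem integrable_of_abs_le_mul_sq_stdG {g : ℝ → ℝ} (hg : AEStronglyMeasurable g stdG)
    (C : ℝ) (hbound : ∀ z, |g z| ≤ C * z ^ 2) : Integrable g stdG :=
  ((memLp_id_gaussianReal 2).integrable_sq.const_mul C).mono' hg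
    (Eventually.of_forall hbound)

theorem integral_mul_deriv_swish_mul_swish_pos {c : ℝ} (hc : 0 < c) :
    0 < ∫ z, z * deriv swish (c * z) * swish (c * z) ∂stdG := by
  have hmeas : Measurable fun z : ℝ => z * deriv swish (c * z) * swish (c * z) := by
    have := measurable_deriv swish
    have := differentiable_swish.continuous.measurable
    fun_prop
  refine integral_pos_of_ae_pos_add_comp_neg
    (integrable_of_abs_le_mul_sq_stdG hmeas.aestronglyMeasurable (2 * c) fun z => ?_)
    ((stdG.ae_ne 0).mono fun z hz => ?_)
  · calc |z * deriv swish (c * z) * swish (c * z)|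
        = |z| * |deriv swish (c * z)| * |swish (c * z)| := by rw [abs_mul, abs_mul]
      _ ≤ |z| * 2 * |c * z| := by
        gcongr |z| * ?_ * ?_
        exacts [abs_deriv_swish_le _, abs_swish_le _]
      _ = 2 * c * z ^ 2 := by rw [abs_mul, abs_of_pos hc, ← sq_abs z]; ring
  · have h := mul_deriv_swish_mul_swish_add_neg_pos (mul_ne_zero hc.ne' hz)
    rw [mul_neg]
    nlinarith

theorem integrable_swish_sq (c : ℝ) : Integrable (fun z => swish (c * z) ^ 2) stdG := by
  have := differentiable_swish.continuous
  refine integrable_of_abs_le_mul_sq_stdG (by fun_prop) (c ^ 2) fun z => ?_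
  rw [abs_pow, ← mul_pow, ← sq_abs (c * z)]
  exact pow_le_pow_left₀ (abs_nonneg _) (abs_swish_le _) 2

theorem integral_swish_sq_lt {c c' : ℝ} (hc : 0 < c) (hcc' : c < c') :
    ∫ z, swish (c * z) ^ 2 ∂stdG < ∫ z, swish (c' * z) ^ 2 ∂stdG := by
  have h := integral_pos_of_ae_pos_add_comp_neg
    (f := fun z => swish (c' * z) ^ 2 - swish (c * z) ^ 2)
    ((integrable_swish_sq c').sub (integrable_swish_sq c)) ((stdG.ae_ne 0).mono fun z hz => ?_)
  · rwa [integral_sub (integrable_swish_sq c') (integrable_swish_sq c), sub_pos] at h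
  have hlt := swish_sq_add_swish_neg_sq_lt (a := c * z) (b := c' * z) (by
    rw [abs_mul, abs_mul, abs_of_pos hc, abs_of_pos (hc.trans hcc')]
    exact mul_lt_mul_of_pos_right hcc' (abs_pos.2 hz))
  simp only [mul_neg] at hlt ⊢
  linarith

/-- For Swish with `g(t) = t φ'(t) φ(t)`: `g(t) + g(−t) > 0` for `t ≠ 0`; equivalently for
`t > 0`, `1 + e^{−t} + te^{−t} > e^{−3t}(−1 − e^t + te^t)`. Consequently
`E[Z φ'(√x Z) φ(√x Z)] > 0` for `x > 0`, so the variance function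
`F(x) = σ_b² + σ_w² E[φ(√x Z)²]` is strictly increasing on `(0, ∞)`. -/
theorem stmt18 :
    (∀ t : ℝ, t ≠ 0 →
      0 < t * deriv swish t * swish t + (-t) * deriv swish (-t) * swish (-t)) ∧
    (∀ t : ℝ, 0 < t →
      Real.exp (-(3 * t)) * (-1 - Real.exp t + t * Real.exp t) <
        1 + Real.exp (-t) + t * Real.exp (-t)) ∧
    (∀ x : ℝ, 0 < x →
      0 < ∫ z, z * deriv swish (Real.sqrt x * z) * swish (Real.sqrt x * z) ∂stdG) ∧
    (∀ σb σw : ℝ, 0 ≤ σb → 0 < σw →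
      StrictMonoOn (fun x => σb ^ 2 + σw ^ 2 * ∫ z, (swish (Real.sqrt x * z)) ^ 2 ∂stdG)
        (Ioi 0)) := by
  refine ⟨fun t => mul_deriv_swish_mul_swish_add_neg_pos, fun t _ => exp_neg_three_mul_mul_lt t,
    fun x hx => integral_mul_deriv_swish_mul_swish_pos (sqrt_pos.2 hx), ?_⟩
  intro σb σw _ hσw x hx y _ hxy
  have h := integral_swish_sq_lt (sqrt_pos.2 hx) (sqrt_lt_sqrt (le_of_lt hx) hxy)
  simpa using mul_lt_mul_of_pos_left h (pow_pos hσw 2)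
end
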